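/- arXiv:1408.2557 — 8 statements merged into one kernel-verified Lean document; each statement's English description precedes it below -/
import Mathlib

section
/- Let G be a bipartite graph with bipartition X ⊔ Y, and let G' be the graph on the same vertex set whose edges are the edges of G together with all pairs {u,v} that are even-connected in G with respect to a fixed edge list e_1, ..., e_s. Then G' is bipartite with the same bipartition X ⊔ Y. -/
open SimpleGraph

variable {V : Type*}

/-- `X, Y` form a bipartition of the simple graph `G`: they are disjoint,
cover the vertex set, and are both independent sets. -/
def IsBipartition (G : SimpleGraph V) (X Y : Set V) : Prop :=
  Disjoint X Y ∧ X ∪ Y = Set.univ ∧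
    (∀ u ∈ X, ∀ v ∈ X, ¬ G.Adj u v) ∧ (∀ u ∈ Y, ∀ v ∈ Y, ¬ G.Adj u v)

/-- `c : ZMod n → V` is a cycle of length `n` in `H`: `n` distinct vertices,
consecutive ones (cyclically) adjacent. -/
def IsCycleOn (H : SimpleGraph V) {n : ℕ} (c : ZMod n → V) : Prop :=
  Function.Injective c ∧ ∀ i, H.Adj (c i) (c (i + 1))

/-- An induced (chordless) cycle: the only adjacencies among the cycle
vertices are the cycle edges. -/
def IsInducedCycleOn (H : SimpleGraph V) {n : ℕ} (c : ZMod n → V) : Prop :=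
  IsCycleOn H c ∧ ∀ i j, H.Adj (c i) (c j) → j = i + 1 ∨ i = j + 1

/-- `u` and `v` are even-connected in `G` with respect to the edge list `E`:
there is a walk `p 0, …, p (2k+1)` in `G` from `u` to `v` with `k ≥ 1` whose
matched pairs `p (2l+1) p (2l+2)` all come from `E`, each member of `E` being
used at most its multiplicity in `E`. -/
def EvenConnected [DecidableEq V] (G : SimpleGraph V) (E : List (Sym2 V))
    (u v : V) : Prop :=
  ∃ (k : ℕ) (p : ℕ → V), 1 ≤ k ∧ p 0 = u ∧ p (2 * k + 1) = v ∧
    (∀ r, r ≤ 2 * k → G.Adj (p r) (p (r + 1))) ∧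
    (∀ l, l < k → s(p (2 * l + 1), p (2 * l + 2)) ∈ E) ∧
    (∀ e ∈ E, ((Finset.range k).filter
        (fun l => s(p (2 * l + 1), p (2 * l + 2)) = e)).card ≤ E.count e)

/-- The bipartite complement of `G` with respect to the bipartition `X ⊔ Y`. -/
def bipCompl (G : SimpleGraph V) (X Y : Set V) : SimpleGraph V :=
  SimpleGraph.fromRel (fun a b => a ∈ X ∧ b ∈ Y ∧ ¬ G.Adj a b)

lemma adj_flip {G : SimpleGraph V} {X Y : Set V} (hbip : IsBipartition G X Y)
    {a b : V} (hab : G.Adj a b) : (a ∈ X ↔ b ∉ X) := by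
  obtain ⟨hdis, hcov, hX, hY⟩ := hbip
  have ha : a ∈ X ∨ a ∈ Y := by
    have := Set.mem_univ a; rw [← hcov] at this; exact this
  have hb : b ∈ X ∨ b ∈ Y := by
    have := Set.mem_univ b; rw [← hcov] at this; exact this
  constructor
  · intro haX hbX; exact hX a haX b hbX hab
  · intro hbnX
    rcases ha with h | h
    · exact h
    · rcases hb with h' | h'
      · exact absurd h' hbnX
      · exact absurd hab (hY a h b h')

lemma alt_mem {G : SimpleGraph V} {X Y : Set V} (hbip : IsBipartition G X Y)
    {p : ℕ → V} {n : ℕ} (hadj : ∀ r, r ≤ n → G.Adj (p r) (p (r + 1))) :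
    ∀ r, r ≤ n + 1 → (p r ∈ X ↔ (Even r ↔ p 0 ∈ X)) := by
  intro r
  induction r with
  | zero => simp
  | succ m ih =>
    intro hm
    have hm' : m ≤ n + 1 := Nat.le_of_succ_le hm
    have h1 := ih hm'
    have h2 := adj_flip hbip (hadj m (Nat.lt_succ_iff.mp hm))
    rw [Nat.even_add_one]
    tauto

lemma even_conn_flip {G : SimpleGraph V} {X Y : Set V} [DecidableEq V]
    (hbip : IsBipartition G X Y) {E : List (Sym2 V)} {u v : V}
    (h : EvenConnected G E u v) : (u ∈ X ↔ v ∉ X) := by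
  obtain ⟨k, p, hk, hp0, hpv, hadj, -, -⟩ := h
  have := alt_mem hbip hadj (2 * k + 1) le_rfl
  rw [hp0, hpv] at this
  have hodd : ¬ Even (2 * k + 1) := by simp [Nat.even_add_one, Nat.even_mul]
  tauto

/-- adding to a bipartite graph `G` all even-connected pairs with
respect to a fixed edge list gives a graph which is bipartite with the same
bipartition. -/
theorem evenConnection_graph_bipartite
    [Fintype V] [DecidableEq V] (G : SimpleGraph V) (X Y : Set V)
    (hbip : IsBipartition G X Y) (E : List (Sym2 V))
    (hE : ∀ e ∈ E, e ∈ G.edgeSet) :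
    IsBipartition
      (SimpleGraph.fromRel (fun a b => G.Adj a b ∨ EvenConnected G E a b)) X Y := by
  obtain ⟨hdis, hcov, hX, hY⟩ := hbip
  have hbip' : IsBipartition G X Y := ⟨hdis, hcov, hX, hY⟩
  refine ⟨hdis, hcov, ?_, ?_⟩
  · intro u hu v hv hadj
    rw [SimpleGraph.fromRel_adj] at hadj
    obtain ⟨hne, h | h⟩ := hadj
    · rcases h with h | h
      · exact hX u hu v hv h
      · exact absurd hv ((even_conn_flip hbip' h).mp hu)
    · rcases h with h | h
      · exact hX v hv u hu h
      · exact absurd hu ((even_conn_flip hbip' h).mp hv)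
  · intro u hu v hv hadj
    have hu' : u ∉ X := fun h => hdis.ne_of_mem h hu rfl
    have hv' : v ∉ X := fun h => hdis.ne_of_mem h hv rfl
    rw [SimpleGraph.fromRel_adj] at hadj
    obtain ⟨hne, h | h⟩ := hadj
    · rcases h with h | h
      · exact hY u hu v hv h
      · have := even_conn_flip hbip' h; tauto
    · rcases h with h | h
      · exact hY v hv u hu h
      · have := even_conn_flip hbip' h; tauto
end

section
/- Let G be a graph and e = xy an edge of G. Let G' be the graph with the same vertices whose edges are those of G together with all pairs {u,v} with u ≠ v even-connected in G with respect to e. Then {u,v} (u ≠ v) is an edge of G' if and only if {u,v} is an edge of G, or both {u,x} and {y,v} are edges of G, or both {u,y} and {x,v} are edges of G. -/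
open SimpleGraph

variable {V : Type*}

private lemma evenConnected_single_imp [DecidableEq V] (G : SimpleGraph V) (x y u v : V)
    (h : EvenConnected G [s(x, y)] u v) :
    (G.Adj u x ∧ G.Adj y v) ∨ (G.Adj u y ∧ G.Adj x v) := by
  obtain ⟨k, p, hk, h0, hend, hadj, hmem, hcount⟩ := h
  have hk1 : k = 1 := by
    have hfilt : ((Finset.range k).filter
        (fun l => s(p (2 * l + 1), p (2 * l + 2)) = s(x, y))) = Finset.range k := by
      apply Finset.filter_true_of_mem
      intro l hl
      have := hmem l (Finset.mem_range.mp hl)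
      simpa using this
    have := hcount s(x, y) (by simp)
    rw [hfilt] at this
    simp at this
    omega
  subst hk1
  have h12 : s(p 1, p 2) = s(x, y) := by simpa using hmem 0 (by norm_num)
  have ha0 : G.Adj u (p 1) := h0 ▸ hadj 0 (by norm_num)
  have ha2 : G.Adj (p 2) v := by
    have := hadj 2 (by norm_num)
    rwa [show (2:ℕ) + 1 = 2 * 1 + 1 by norm_num, hend] at this
  rw [Sym2.eq_iff] at h12
  rcases h12 with ⟨e1, e2⟩ | ⟨e1, e2⟩
  · left; exact ⟨e1 ▸ ha0, e2 ▸ ha2⟩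
  · right; exact ⟨e1 ▸ ha0, e2 ▸ ha2⟩

private lemma evenConnected_single_of [DecidableEq V] (G : SimpleGraph V) (x y u v : V)
    (h1 : G.Adj u x) (h2 : G.Adj x y) (h3 : G.Adj y v) :
    EvenConnected G [s(x, y)] u v := by
  refine ⟨1, fun n => if n = 0 then u else if n = 1 then x else if n = 2 then y else v,
    le_refl 1, by norm_num, by norm_num, ?_, ?_, ?_⟩
  · intro r hr
    interval_cases r <;> simpa
  · intro l hl
    interval_cases l
    simp
  · intro e he
    calc ((Finset.range 1).filter _).card ≤ (Finset.range 1).card :=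
          Finset.card_filter_le _ _
      _ = 1 := by simp
      _ ≤ _ := by
        simp at he
        simp [he]

/-- description of the edges of `G' = G + (even-connections w.r.t.
a single edge `e = xy`)`: `uv ∈ G'` iff `uv ∈ G`, or `ux, yv ∈ G`, or
`uy, xv ∈ G`. -/
theorem evenConnection_single_edge_description
    [Fintype V] [DecidableEq V] (G : SimpleGraph V) (x y : V) (he : G.Adj x y)
    (G' : SimpleGraph V)
    (hG' : G' =
      SimpleGraph.fromRel (fun a b => G.Adj a b ∨ EvenConnected G [s(x, y)] a b))
    (u v : V) (huv : u ≠ v) :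
    G'.Adj u v ↔
      G.Adj u v ∨ (G.Adj u x ∧ G.Adj y v) ∨ (G.Adj u y ∧ G.Adj x v) := by
  subst hG'
  rw [SimpleGraph.fromRel_adj]
  constructor
  · rintro ⟨-, (h | h) | (h | h)⟩
    · exact Or.inl h
    · exact Or.inr (evenConnected_single_imp G x y u v h)
    · exact Or.inl h.symm
    · rcases evenConnected_single_imp G x y v u h with ⟨a, b⟩ | ⟨a, b⟩
      · exact Or.inr (Or.inr ⟨b.symm, a.symm⟩)
      · exact Or.inr (Or.inl ⟨b.symm, a.symm⟩)
  · rintro (h | ⟨a, b⟩ | ⟨a, b⟩)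
    · exact ⟨huv, Or.inl (Or.inl h)⟩
    · exact ⟨huv, Or.inl (Or.inr (evenConnected_single_of G x y u v a he b))⟩
    · refine ⟨huv, Or.inl (Or.inr ?_)⟩
      have := evenConnected_single_of G y x u v a he.symm b
      rwa [Sym2.eq_swap] at this
end

section
/- Let G be a bipartite graph with bipartition X ⊔ Y, let e = xy ∈ E(G) with x ∈ X, y ∈ Y, and let G' be G with all pairs {u,v} (u ∈ X, v ∈ Y, uy ∈ E(G), xv ∈ E(G)) added. Suppose x_1, x_2, x_3 ∈ X and y_1, y_2, y_3 ∈ Y are such that x_1y ∈ E(G), xy_2 ∈ E(G), x_1y_1 ∉ E(G'), and x_2y_2 ∉ E(G'). If x_3y_1 ∉ E(G), then x_1y_1 ∈ E(G') or xy_1 ∉ E(G); consequently if x_3 and y_1 are even-connected with respect to e (i.e., x_3y ∈ E(G) and xy_1 ∈ E(G)), a contradiction arises, so x_3y_1 ∈ E(G) whenever x_3y_1 is an edge of G'. -/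
open SimpleGraph

variable {V : Type*}

/-- claim (II) in the proof of Theorem 3.8: any edge `x₃y₁` of
`G'` must already be an edge of `G`. -/
theorem claim_II_of_theorem_main
    [Fintype V] (G : SimpleGraph V) (X Y : Set V)
    (hbip : IsBipartition G X Y)
    (x y : V) (hx : x ∈ X) (hy : y ∈ Y) (he : G.Adj x y)
    (G' : SimpleGraph V)
    (hG' : G' = SimpleGraph.fromRel
      (fun a b => G.Adj a b ∨ (a ∈ X ∧ b ∈ Y ∧ G.Adj a y ∧ G.Adj x b)))
    (x1 x2 x3 y1 y2 y3 : V)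
    (hX : x1 ∈ X ∧ x2 ∈ X ∧ x3 ∈ X) (hY : y1 ∈ Y ∧ y2 ∈ Y ∧ y3 ∈ Y)
    (h1y : G.Adj x1 y) (hxy2 : G.Adj x y2)
    (h11 : ¬ G'.Adj x1 y1) (h22 : ¬ G'.Adj x2 y2) :
    (¬ G.Adj x3 y1 → (G'.Adj x1 y1 ∨ ¬ G.Adj x y1)) ∧
    (G'.Adj x3 y1 → G.Adj x3 y1) := by
  obtain ⟨hdisj, -, -, -⟩ := hbip
  obtain ⟨hx1, hx2, hx3⟩ := hX
  obtain ⟨hy1, hy2, hy3⟩ := hY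
  have hne : x1 ≠ y1 := fun h => hdisj.ne_of_mem hx1 hy1 h
  have key : ¬ G.Adj x y1 := by
    intro hxy1
    apply h11
    rw [hG']
    exact ⟨hne, Or.inl (Or.inr ⟨hx1, hy1, h1y, hxy1⟩)⟩
  refine ⟨fun _ => Or.inr key, fun h31 => ?_⟩
  rw [hG'] at h31
  obtain ⟨hne3, h | h⟩ := h31
  · rcases h with h | ⟨-, -, -, h⟩
    · exact h
    · exact absurd h key
  · rcases h with h | ⟨h, h', -, -⟩
    · exact h.symm
    · exact absurd rfl (hdisj.ne_of_mem h hy1)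
end

section
/- Let G be a connected bipartite graph with bipartition X ⊔ Y such that (a) the complement G^c has at least one induced cycle of length ≥ 4, and (b) the bipartite complement G^{bc} has no induced cycle of length ≥ 6. Let e = xy be an edge of G and let G' be the graph obtained from G by adding all pairs {u,v} with u ∈ X, v ∈ Y, uy ∈ E(G), xv ∈ E(G). Then the bipartite complement (G')^{bc} has no induced cycle of length ≥ 6. -/
open SimpleGraph

variable {V : Type*}

/-!
A long induced cycle `c` of `(G')^{bc}` is a cycle of `G^{bc} ⊇ (G')^{bc}`. If it is not induced
there, a chord `uv` (`u ∈ X`, `v ∈ Y`) is an edge of `G'` but not of `G`, so `u ~ y` and `x ~ v`.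
No edge of `c` joins a neighbour of `y` to a neighbour of `x`; in particular the two `c`-neighbours
of `u` are not adjacent to `x`. Hence the maximal run of consecutive `Y`-vertices of `c` adjacent to
`x` through `v` is flanked by two distinct non-neighbours of `x`, and the arc of `c` between them,
closed up through `x`, is a cycle of length `≥ 6` in `G^{bc}`. It is induced: the inner `X`-vertices
of the arc are `c`-neighbours of neighbours of `x`, hence not adjacent to `y`, so no chord of `c`
ends at them.
-/

lemma ZMod.natCast_inj_of_lt {n a b : ℕ} (ha : a < n) (hb : b < n) :
    (a : ZMod n) = b ↔ a = b :=
  ⟨fun h => by rw [← ZMod.val_natCast_of_lt ha, h, ZMod.val_natCast_of_lt hb], congrArg _⟩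

lemma ZMod.eq_add_one_iff {n : ℕ} [NeZero n] {i j : ZMod n} :
    j = i + 1 ↔ j.val = i.val + 1 ∨ (i.val + 1 = n ∧ j.val = 0) := by
  have hi := ZMod.val_lt i
  have hj := ZMod.val_lt j
  have key : j = i + 1 ↔ j.val = (i.val + 1) % n := by
    conv_lhs => rw [← ZMod.natCast_zmod_val i, ← ZMod.natCast_zmod_val j, ← Nat.cast_add_one,
      ZMod.natCast_eq_natCast_iff', Nat.mod_eq_of_lt hj]
  rw [key]
  rcases (show i.val + 1 ≤ n from hi).lt_or_eq with h | h
  · rw [Nat.mod_eq_of_lt h]; omega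
  · rw [h, Nat.mod_self]; omega

lemma Nat.exists_maximal_run {P : ℕ → Prop} {k₀ N : ℕ} (h0 : ¬P 0) (hN : ¬P N) (hk₀ : P k₀)
    (hk₀N : k₀ ≤ N) :
    ∃ a b, a < k₀ ∧ k₀ < b ∧ b ≤ N ∧ ¬P a ∧ ¬P b ∧ ∀ k, a < k → k < b → P k := by
  classical
  have hk₀N' : k₀ < N := hk₀N.lt_of_ne fun h => hN (h ▸ hk₀)
  have hex : ∃ b, k₀ < b ∧ ¬P b := ⟨N, hk₀N', hN⟩
  have ha : ¬P (Nat.findGreatest (¬P ·) k₀) := Nat.findGreatest_spec (P := (¬P ·)) (zero_le _) h0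
  have hak : Nat.findGreatest (¬P ·) k₀ < k₀ :=
    (Nat.findGreatest_le _).lt_of_ne fun h => ha (h.symm ▸ hk₀)
  refine ⟨_, Nat.find hex, hak, (Nat.find_spec hex).1, Nat.find_min' hex ⟨hk₀N', hN⟩,
    ha, (Nat.find_spec hex).2, fun k hak' hkb => ?_⟩
  by_contra hk
  rcases lt_or_ge k₀ k with h | h
  · exact Nat.find_min hex hkb ⟨h, hk⟩
  · exact Nat.findGreatest_is_greatest hak' h hk

theorem isInducedCycleOn_of_nat {H : SimpleGraph V} {n : ℕ} [NeZero n] {Q : ℕ → V}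
    (hinj : ∀ j < n, ∀ k < n, Q j = Q k → j = k)
    (hadj : ∀ k, k + 1 < n → H.Adj (Q k) (Q (k + 1)))
    (hclose : H.Adj (Q (n - 1)) (Q 0))
    (hind : ∀ j < n, ∀ k < n, H.Adj (Q j) (Q k) →
      k = j + 1 ∨ j = k + 1 ∨ (j + 1 = n ∧ k = 0) ∨ (k + 1 = n ∧ j = 0)) :
    IsInducedCycleOn H (fun i : ZMod n => Q i.val) := by
  refine ⟨⟨fun i j h => ZMod.val_injective n (hinj _ i.val_lt _ j.val_lt h), fun i => ?_⟩,
    fun i j h => ?_⟩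
  · show H.Adj (Q i.val) (Q (i + 1).val)
    rcases ZMod.eq_add_one_iff.1 (rfl : i + 1 = i + 1) with h | ⟨h, h0⟩
    · rw [h]; exact hadj _ (h ▸ (i + 1).val_lt)
    · rw [h0, show i.val = n - 1 by omega]; exact hclose
  · have := hind _ i.val_lt _ j.val_lt h
    rw [ZMod.eq_add_one_iff, ZMod.eq_add_one_iff]
    omega

theorem isInducedCycleOn_apex {H : SimpleGraph V} {L : ℕ} {P : ℕ → V} {v : V}
    (hinj : ∀ j ≤ L, ∀ k ≤ L, P j = P k → j = k)
    (hadj : ∀ k < L, H.Adj (P k) (P (k + 1)))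
    (hind : ∀ j ≤ L, ∀ k ≤ L, H.Adj (P j) (P k) → k = j + 1 ∨ j = k + 1)
    (hv : ∀ k ≤ L, v ≠ P k) (hv0 : H.Adj v (P 0)) (hvL : H.Adj v (P L))
    (hvind : ∀ k ≤ L, H.Adj v (P k) → k = 0 ∨ k = L) :
    IsInducedCycleOn H (fun i : ZMod (L + 2) => if i.val = 0 then v else P (i.val - 1)) := by
  refine isInducedCycleOn_of_nat (Q := fun k => if k = 0 then v else P (k - 1))
    ?_ ?_ (by simpa using hvL.symm) ?_
  · rintro (_ | j) hj (_ | k) hk h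
    · rfl
    · exact absurd h (by simpa using hv k (by omega))
    · exact absurd h.symm (by simpa using hv j (by omega))
    · simpa using hinj j (by omega) k (by omega) (by simpa using h)
  · rintro (_ | k) hk
    · simpa using hv0
    · simpa using hadj k (by omega)
  · rintro (_ | j) hj (_ | k) hk h
    · exact absurd h H.irrefl
    · have := hvind k (by omega) (by simpa using h); omega
    · have := hvind j (by omega) (by simpa using h.symm); omega
    · have := hind j (by omega) k (by omega) (by simpa using h); omega

section BipCompl

variable {G H : SimpleGraph V} {X Y : Set V} {a b : V}

lemma bipCompl_adj : (bipCompl G X Y).Adj a b ↔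
    a ≠ b ∧ ((a ∈ X ∧ b ∈ Y ∧ ¬G.Adj a b) ∨ (b ∈ X ∧ a ∈ Y ∧ ¬G.Adj b a)) :=
  fromRel_adj _ _ _

lemma bipCompl_adj_iff_of_mem (hXY : Disjoint X Y) (ha : a ∈ X) (hb : b ∈ Y) :
    (bipCompl G X Y).Adj a b ↔ ¬G.Adj a b := by
  have hab : a ≠ b := hXY.ne_of_mem ha hb
  have hbX : b ∉ X := fun h => hXY.ne_of_mem h hb rfl
  simp [bipCompl_adj, hab, ha, hb, hbX]

lemma not_adj_of_bipCompl_adj (h : (bipCompl G X Y).Adj a b) : ¬G.Adj a b := by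
  rcases (bipCompl_adj.1 h).2 with ⟨-, -, h⟩ | ⟨-, -, h⟩
  exacts [h, fun h' => h h'.symm]

lemma bipCompl_anti (hGH : G ≤ H) : bipCompl H X Y ≤ bipCompl G X Y := fun a b h => by
  rw [bipCompl_adj] at h ⊢
  exact ⟨h.1, h.2.imp (And.imp_right (And.imp_right (mt (@hGH _ _))))
    (And.imp_right (And.imp_right (mt (@hGH _ _))))⟩

lemma mem_right_of_bipCompl_adj (hXY : Disjoint X Y) (h : (bipCompl G X Y).Adj a b)
    (ha : a ∈ X) : b ∈ Y := by
  rcases (bipCompl_adj.1 h).2 with ⟨-, hb, -⟩ | ⟨-, ha', -⟩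
  exacts [hb, absurd rfl (hXY.ne_of_mem ha ha')]

lemma mem_left_of_bipCompl_adj (hXY : Disjoint X Y) (h : (bipCompl G X Y).Adj a b)
    (ha : a ∈ Y) : b ∈ X := by
  rcases (bipCompl_adj.1 h).2 with ⟨ha', -, -⟩ | ⟨hb, -, -⟩
  exacts [absurd rfl (hXY.ne_of_mem ha' ha), hb]

lemma mem_left_or_mem_right_of_bipCompl_adj (h : (bipCompl G X Y).Adj a b) : a ∈ X ∨ a ∈ Y := by
  rcases (bipCompl_adj.1 h).2 with ⟨ha, -, -⟩ | ⟨-, ha, -⟩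
  exacts [.inl ha, .inr ha]

lemma mem_right_iff_even_and_mem_left_iff_odd {m : ℕ} {c : ZMod m → V} (hXY : Disjoint X Y)
    (hc : ∀ i, (bipCompl G X Y).Adj (c i) (c (i + 1))) {i : ZMod m} (hi : c i ∈ Y) (k : ℕ) :
    (c (i + k) ∈ Y ↔ Even k) ∧ (c (i + k) ∈ X ↔ Odd k) := by
  suffices (c (i + k) ∈ Y ∧ Even k) ∨ (c (i + k) ∈ X ∧ Odd k) by
    rcases this with ⟨hY, hk⟩ | ⟨hX, hk⟩
    · exact ⟨iff_of_true hY hk,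
        iff_of_false (fun h => hXY.ne_of_mem h hY rfl) (Nat.not_odd_iff_even.2 hk)⟩
    · exact ⟨iff_of_false (fun h => hXY.ne_of_mem hX h rfl) (Nat.not_even_iff_odd.2 hk),
        iff_of_true hX hk⟩
  induction k with
  | zero => simpa using hi
  | succ k ih =>
    have hadj := hc (i + k)
    rw [add_assoc, ← Nat.cast_add_one] at hadj
    simp only [Nat.even_add_one, Nat.odd_add_one, Nat.not_even_iff_odd, Nat.not_odd_iff_even]
    rcases ih with ⟨hY, hk⟩ | ⟨hX, hk⟩
    · exact .inr ⟨mem_left_of_bipCompl_adj hXY hadj hY, hk⟩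
    · exact .inl ⟨mem_right_of_bipCompl_adj hXY hadj hX, hk⟩

end BipCompl

/-- `G` together with its even-connections through the edge `xy`: the graph whose edge ideal is
`I(G)² : xy`. -/
def colonGraph (G : SimpleGraph V) (X Y : Set V) (x y : V) : SimpleGraph V :=
  fromRel fun a b => G.Adj a b ∨ (a ∈ X ∧ b ∈ Y ∧ G.Adj a y ∧ G.Adj x b)

section ColonGraph

variable {G : SimpleGraph V} {X Y : Set V} {x y a b : V}

lemma le_colonGraph : G ≤ colonGraph G X Y x y := fun _ _ h =>
  (fromRel_adj _ _ _).2 ⟨h.ne, .inl (.inl h)⟩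

lemma bipCompl_colonGraph_adj_iff (hXY : Disjoint X Y) (ha : a ∈ X) (hb : b ∈ Y) :
    (bipCompl (colonGraph G X Y x y) X Y).Adj a b ↔ ¬G.Adj a b ∧ ¬(G.Adj a y ∧ G.Adj x b) := by
  have hbX : b ∉ X := fun h => hXY.ne_of_mem h hb rfl
  rw [bipCompl_adj_iff_of_mem hXY ha hb, colonGraph, fromRel_adj]
  simp only [ne_eq, hXY.ne_of_mem ha hb, not_false_eq_true, ha, hb, hbX, G.adj_comm b a,
    true_and, false_and, or_false]
  tauto

variable {m : ℕ} {c : ZMod m → V}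

lemma IsInducedCycleOn.adj_of_bipCompl_chord (hXY : Disjoint X Y)
    (hc : IsInducedCycleOn (bipCompl (colonGraph G X Y x y) X Y) c) {i j : ZMod m}
    (hi : c i ∈ X) (hj : c j ∈ Y) (hij : (bipCompl G X Y).Adj (c i) (c j))
    (h₁ : j ≠ i + 1) (h₂ : i ≠ j + 1) : G.Adj (c i) y ∧ G.Adj x (c j) := by
  have h : ¬(bipCompl (colonGraph G X Y x y) X Y).Adj (c i) (c j) := fun h =>
    (hc.2 i j h).elim h₁ h₂
  rw [bipCompl_colonGraph_adj_iff hXY hi hj, not_and, not_not] at h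
  exact h (not_adj_of_bipCompl_adj hij)

lemma IsCycleOn.not_adj_cycle_neighbors (hXY : Disjoint X Y)
    (hc : IsCycleOn (bipCompl (colonGraph G X Y x y) X Y) c) {i : ZMod m}
    (hi : c i ∈ X) (hiy : G.Adj (c i) y) : ¬G.Adj x (c (i + 1)) ∧ ¬G.Adj x (c (i - 1)) := by
  have hnext := hc.2 i
  have hprev := (hc.2 (i - 1)).symm
  rw [sub_add_cancel] at hprev
  exact ⟨fun h => ((bipCompl_colonGraph_adj_iff hXY hi
      (mem_right_of_bipCompl_adj hXY hnext hi)).1 hnext).2 ⟨hiy, h⟩,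
    fun h => ((bipCompl_colonGraph_adj_iff hXY hi
      (mem_right_of_bipCompl_adj hXY hprev hi)).1 hprev).2 ⟨hiy, h⟩⟩

end ColonGraph

structure IsFlankedArc (G : SimpleGraph V) (Y : Set V) (x : V) {m : ℕ} (c : ZMod m → V)
    (w : ZMod m) (L : ℕ) : Prop where
  mem_right : c w ∈ Y
  four_le : 4 ≤ L
  even : Even L
  add_two_le : L + 2 ≤ m
  not_adj_start : ¬G.Adj x (c w)
  not_adj_end : ¬G.Adj x (c (w + L))
  adj_inner : ∀ k, 0 < k → k < L → Even k → G.Adj x (c (w + k))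

namespace IsFlankedArc

variable {G : SimpleGraph V} {X Y : Set V} {x y : V} {m : ℕ} {c : ZMod m → V} {w : ZMod m}
  {L : ℕ}

lemma not_adj_of_odd (hXY : Disjoint X Y)
    (hc : IsCycleOn (bipCompl (colonGraph G X Y x y) X Y) c) (hA : IsFlankedArc G Y x c w L)
    {j : ℕ} (hj : Odd j) (hjL : j < L) : ¬G.Adj (c (w + j)) y := by
  intro hy
  obtain ⟨hnext, hprev⟩ := hc.not_adj_cycle_neighbors hXY
    ((mem_right_iff_even_and_mem_left_iff_odd hXY hc.2 hA.mem_right j).2.2 hj) hy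
  obtain ⟨r, rfl⟩ := hj
  obtain ⟨s, rfl⟩ := hA.even
  rcases (show 2 * r + 2 < s + s ∨ 2 * r + 2 = s + s by omega) with h | h
  · rw [add_assoc, ← Nat.cast_add_one] at hnext
    exact hnext (hA.adj_inner _ (by omega) h ⟨r + 1, by omega⟩)
  · rw [show w + ((2 * r + 1 : ℕ) : ZMod m) - 1 = w + ((2 * r : ℕ) : ZMod m) by
      push_cast; ring] at hprev
    have := hA.four_le
    exact hprev (hA.adj_inner (2 * r) (by omega) (by omega) ⟨r, by omega⟩)

lemma eq_add_one_of_bipCompl_adj (hXY : Disjoint X Y)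
    (hc : IsInducedCycleOn (bipCompl (colonGraph G X Y x y) X Y) c)
    (hA : IsFlankedArc G Y x c w L) {j k : ℕ} (hj : j ≤ L) (hk : k ≤ L)
    (h : (bipCompl G X Y).Adj (c (w + j)) (c (w + k))) : k = j + 1 ∨ j = k + 1 := by
  have hpar := mem_right_iff_even_and_mem_left_iff_odd hXY hc.1.2 hA.mem_right
  wlog hjX : c (w + j) ∈ X generalizing j k
  · have hjY : c (w + j) ∈ Y := (hpar j).1.2 (Nat.not_odd_iff_even.1 (mt (hpar j).2.2 hjX))
    exact (this hk hj h.symm (mem_left_of_bipCompl_adj hXY h hjY)).symm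
  have hkY := mem_right_of_bipCompl_adj hXY h hjX
  have hm := hA.add_two_le
  by_contra hne
  rw [not_or] at hne
  have h₁ : w + (k : ZMod m) ≠ w + j + 1 := by
    rw [add_assoc, ← Nat.cast_add_one, Ne, add_right_inj,
      ZMod.natCast_inj_of_lt (by omega) (by omega)]
    exact hne.1
  have h₂ : w + (j : ZMod m) ≠ w + k + 1 := by
    rw [add_assoc, ← Nat.cast_add_one, Ne, add_right_inj,
      ZMod.natCast_inj_of_lt (by omega) (by omega)]
    exact hne.2
  have hjodd := (hpar j).2.1 hjX
  have hjL : j < L := hj.lt_of_ne fun h => Nat.not_odd_iff_even.2 hA.even (h ▸ hjodd)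
  exact hA.not_adj_of_odd hXY hc.1 hjodd hjL (hc.adj_of_bipCompl_chord hXY hjX hkY h h₁ h₂).1

theorem isInducedCycleOn_apex_bipCompl (hXY : Disjoint X Y)
    (hc : IsInducedCycleOn (bipCompl (colonGraph G X Y x y) X Y) c)
    (hA : IsFlankedArc G Y x c w L) (hx : x ∈ X) (he : G.Adj x y) :
    IsInducedCycleOn (bipCompl G X Y)
      (fun i : ZMod (L + 2) => if i.val = 0 then x else c (w + ((i.val - 1 : ℕ) : ZMod m))) := by
  have hpar := mem_right_iff_even_and_mem_left_iff_odd hXY hc.1.2 hA.mem_right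
  have hm := hA.add_two_le
  have hL : ∀ k, Odd k → k ≤ L → k < L := fun k hk hkL =>
    hkL.lt_of_ne fun h => Nat.not_odd_iff_even.2 hA.even (h ▸ hk)
  refine isInducedCycleOn_apex (P := fun k => c (w + k))
    (fun j hj k hk h => (ZMod.natCast_inj_of_lt (by omega) (by omega)).1
      (add_left_cancel (hc.1.1 h)))
    (fun k _ => bipCompl_anti le_colonGraph (by
      rw [Nat.cast_add_one, ← add_assoc]; exact hc.1.2 (w + k)))
    (fun j hj k hk h => hA.eq_add_one_of_bipCompl_adj hXY hc hj hk h)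
    (fun k hk h => ?_)
    ((bipCompl_adj_iff_of_mem hXY hx (by simpa using hA.mem_right)).2
      (by simpa using hA.not_adj_start))
    ((bipCompl_adj_iff_of_mem hXY hx ((hpar L).1.2 hA.even)).2 hA.not_adj_end)
    (fun k hk h => ?_)
  · rcases Nat.even_or_odd k with hk' | hk'
    · exact hXY.ne_of_mem hx ((hpar k).1.2 hk') h
    · exact hA.not_adj_of_odd hXY hc.1 hk' (hL k hk' hk) (h ▸ he)
  · by_contra hne
    rcases Nat.even_or_odd k with hk' | hk'
    · exact not_adj_of_bipCompl_adj h (hA.adj_inner k (by omega) (by omega) hk')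
    · exact hXY.ne_of_mem ((hpar k).2.2 hk') (mem_right_of_bipCompl_adj hXY h hx) rfl

end IsFlankedArc

section Chord

variable {G : SimpleGraph V} {X Y : Set V} {x y : V} {m : ℕ} {c : ZMod m → V}

theorem IsCycleOn.exists_isFlankedArc (hXY : Disjoint X Y)
    (hc : IsCycleOn (bipCompl (colonGraph G X Y x y) X Y) c) (hm : 2 ≤ m) {p q : ZMod m}
    (hp : c p ∈ X) (hpy : G.Adj (c p) y) (hq : c q ∈ Y) (hqx : G.Adj x (c q)) :
    ∃ w L, IsFlankedArc G Y x c w L := by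
  have : NeZero m := ⟨by omega⟩
  obtain ⟨hx₁, hx₂⟩ := hc.not_adj_cycle_neighbors hXY hp hpy
  have hz : c (p + 1) ∈ Y := mem_right_of_bipCompl_adj hXY (hc.2 p) hp
  have hz' : c (p - 1) ∈ Y := by
    have h := (hc.2 (p - 1)).symm
    rw [sub_add_cancel] at h
    exact mem_right_of_bipCompl_adj hXY h hp
  have hpar := mem_right_iff_even_and_mem_left_iff_odd hXY hc.2 hz
  have hk₀ : p + 1 + ((q - (p + 1)).val : ZMod m) = q := by
    rw [ZMod.natCast_zmod_val]; ring
  have hk₀N : (q - (p + 1)).val ≤ m - 2 := by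
    have hlt := (q - (p + 1)).val_lt
    by_contra h
    have hpq : p + 1 + ((m - 1 : ℕ) : ZMod m) = p := by
      rw [Nat.cast_sub (by omega), ZMod.natCast_self]; ring
    rw [show (q - (p + 1)).val = m - 1 by omega, hpq] at hk₀
    exact hXY.ne_of_mem hp hq (congrArg c hk₀)
  -- `X`-vertices are admitted into the run so that it consists of consecutive positions
  obtain ⟨a, b, hak, hkb, hbN, ha, hb, hab⟩ :=
    Nat.exists_maximal_run (P := fun k => c (p + 1 + k) ∈ X ∨ G.Adj x (c (p + 1 + k)))
      (N := m - 2) (by simpa using ⟨fun h => hXY.ne_of_mem h hz rfl, hx₁⟩)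
      (by
        rw [show p + 1 + ((m - 2 : ℕ) : ZMod m) = p - 1 by
          rw [Nat.cast_sub hm, ZMod.natCast_self]; ring]
        simpa using ⟨fun h => hXY.ne_of_mem h hz' rfl, hx₂⟩)
      (.inr (by rw [hk₀]; exact hqx)) hk₀N
  rw [not_or] at ha hb
  obtain ⟨r, hr⟩ := Nat.not_odd_iff_even.1 (mt (hpar a).2.2 ha.1)
  obtain ⟨s, hs⟩ := Nat.not_odd_iff_even.1 (mt (hpar b).2.2 hb.1)
  obtain ⟨t, ht⟩ := (hpar _).1.1 (by rw [hk₀]; exact hq)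
  refine ⟨p + 1 + a, b - a, (hpar a).1.2 ⟨r, hr⟩, by omega, ⟨s - r, by omega⟩, by omega,
    ha.2, ?_, fun k hk hkL hke => ?_⟩
  · rw [add_assoc, ← Nat.cast_add, Nat.add_sub_cancel' (hak.trans hkb).le]
    exact hb.2
  · have hY := (hpar (a + k)).1.2 (Even.add ⟨r, hr⟩ hke)
    have h := (hab (a + k) (by omega) (by omega)).resolve_left fun h => hXY.ne_of_mem h hY rfl
    rwa [Nat.cast_add, ← add_assoc] at h

theorem IsInducedCycleOn.exists_induced_cycle_of_bipCompl_chord (hXY : Disjoint X Y)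
    (hc : IsInducedCycleOn (bipCompl (colonGraph G X Y x y) X Y) c) (hm : 2 ≤ m) (hx : x ∈ X)
    (he : G.Adj x y) {i j : ZMod m} (hij : (bipCompl G X Y).Adj (c i) (c j))
    (h₁ : j ≠ i + 1) (h₂ : i ≠ j + 1) :
    ∃ (n : ℕ) (c' : ZMod n → V), 6 ≤ n ∧ IsInducedCycleOn (bipCompl G X Y) c' := by
  wlog hi : c i ∈ X generalizing i j
  · exact this hij.symm h₂ h₁ (mem_left_of_bipCompl_adj hXY hij
      ((mem_left_or_mem_right_of_bipCompl_adj hij).resolve_left hi))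
  have hj := mem_right_of_bipCompl_adj hXY hij hi
  obtain ⟨hiy, hjx⟩ := hc.adj_of_bipCompl_chord hXY hi hj hij h₁ h₂
  obtain ⟨w, L, hA⟩ := hc.1.exists_isFlankedArc hXY hm hi hiy hj hjx
  exact ⟨L + 2, _, by have := hA.four_le; omega, hA.isInducedCycleOn_apex_bipCompl hXY hc hx he⟩

end Chord

theorem bipCompl_of_colon_ideal_graph_no_long_induced_cycle_general
    (G : SimpleGraph V) (X Y : Set V)
    (hbip : IsBipartition G X Y)
    (hbc : ∀ (m : ℕ) (c : ZMod m → V), 6 ≤ m →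
      ¬ IsInducedCycleOn (bipCompl G X Y) c)
    (x y : V) (hx : x ∈ X) (he : G.Adj x y)
    (G' : SimpleGraph V)
    (hG' : G' = SimpleGraph.fromRel
      (fun a b => G.Adj a b ∨ (a ∈ X ∧ b ∈ Y ∧ G.Adj a y ∧ G.Adj x b))) :
    ∀ (m : ℕ) (c : ZMod m → V), 6 ≤ m →
      ¬ IsInducedCycleOn (bipCompl G' X Y) c := by
  subst hG'
  intro m c hm hc
  by_cases hchord : ∀ i j, (bipCompl G X Y).Adj (c i) (c j) → j = i + 1 ∨ i = j + 1
  · exact hbc m c hm ⟨⟨hc.1.1, fun i => bipCompl_anti le_colonGraph (hc.1.2 i)⟩, hchord⟩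
  simp only [not_forall, not_or] at hchord
  obtain ⟨i, j, hij, h₁, h₂⟩ := hchord
  obtain ⟨n, c', hn, hc'⟩ :=
    hc.exists_induced_cycle_of_bipCompl_chord hbip.1 (by omega) hx he hij h₁ h₂
  exact hbc n c' hn hc'

/-- (heart of Theorem 3.8, case `s = 1`) for a connected
bipartite graph `G` with `Gᶜ` containing an induced cycle of length `≥ 4` and
`G^{bc}` containing no induced cycle of length `≥ 6`, adding the
even-connections with respect to a single edge `e = xy` produces a graph `G'`
whose bipartite complement has no induced cycle of length `≥ 6`. -/
theorem bipCompl_of_colon_ideal_graph_no_long_induced_cycle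
    [Fintype V] (G : SimpleGraph V) (X Y : Set V)
    (hbip : IsBipartition G X Y) (hconn : G.Connected)
    (hc4 : ∃ (m : ℕ) (c : ZMod m → V), 4 ≤ m ∧ IsInducedCycleOn Gᶜ c)
    (hbc : ∀ (m : ℕ) (c : ZMod m → V), 6 ≤ m →
      ¬ IsInducedCycleOn (bipCompl G X Y) c)
    (x y : V) (hx : x ∈ X) (hy : y ∈ Y) (he : G.Adj x y)
    (G' : SimpleGraph V)
    (hG' : G' = SimpleGraph.fromRel
      (fun a b => G.Adj a b ∨ (a ∈ X ∧ b ∈ Y ∧ G.Adj a y ∧ G.Adj x b))) :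
    ∀ (m : ℕ) (c : ZMod m → V), 6 ≤ m →
      ¬ IsInducedCycleOn (bipCompl G' X Y) c :=
  bipCompl_of_colon_ideal_graph_no_long_induced_cycle_general G X Y hbip hbc x y hx he G' hG'
end

section
/- Let G be a graph, let e_1, ..., e_s be edges of G (with repetition allowed), and fix i ∈ {1,...,s}. Let G_i be the graph on V(G) whose edges are those of G together with all pairs even-connected in G with respect to the single edge e_i. Then two vertices u, v are even-connected in G with respect to e_1 ⋯ e_s (or uv ∈ E(G)) if and only if u, v are even-connected in G_i with respect to the list e_1,...,e_s with e_i removed (or uv ∈ E(G_i)), provided G is bipartite. -/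
open SimpleGraph

variable {V : Type*}

/-!
An even-connection is an alternating walk `a, x₁, y₁, …, xₖ, yₖ, v` together with its list of
pairs `xᵢyᵢ`; an edge `av` is the same thing with the empty list. Going from `G` to `Gᵢ`, every
use of `e = xy` is cut out: the three steps `a x y b` around it become the edge `ab` of `Gᵢ`
(`a ≠ b`, as they lie on opposite sides of the bipartition). Going back, each edge of `Gᵢ` not
in `G` expands to a path through `e`; by bipartiteness the first and the last of them traverse
`e` in the same direction, so everything between them can be replaced by a single use of `e`.
-/

namespace IsBipartition

variable {G : SimpleGraph V} {X Y : Set V}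

theorem nonempty_coloring (h : IsBipartition G X Y) : Nonempty (G.Coloring Bool) := by
  classical
  obtain ⟨-, hcover, hX, hY⟩ := h
  have hmem : ∀ a, a ∉ X → a ∈ Y := fun a ha =>
    ((Set.mem_union a X Y).mp (hcover ▸ Set.mem_univ a)).resolve_left ha
  refine ⟨Coloring.mk (fun a => decide (a ∈ X)) fun {a b} hab hcol => ?_⟩
  rw [decide_eq_decide] at hcol
  by_cases ha : a ∈ X
  · exact hX a ha b (hcol.mp ha) hab
  · exact hY a (hmem a ha) b (hmem b (mt hcol.mpr ha)) hab

end IsBipartition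

namespace SimpleGraph.Coloring

variable {G : SimpleGraph V}

theorem eq_of_ne_of_ne (c : G.Coloring Bool) {a b d : V} (hab : c a ≠ c b) (hbd : c b ≠ c d) :
    c a = c d := by
  revert hab hbd
  cases c a <;> cases c b <;> cases c d <;> decide

theorem eq_of_adj_of_adj (c : G.Coloring Bool) {a b d : V} (hab : G.Adj a b)
    (hbd : G.Adj b d) : c a = c d :=
  c.eq_of_ne_of_ne (c.valid hab) (c.valid hbd)

theorem ne_of_adj_of_adj_of_adj (c : G.Coloring Bool) {a b d z : V} (hab : G.Adj a b)
    (hbd : G.Adj b d) (hdz : G.Adj d z) : a ≠ z := by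
  rintro rfl
  exact c.valid hdz (c.eq_of_adj_of_adj hab hbd).symm

theorem eq_of_mk_eq (c : G.Coloring Bool) {x y x' y' : V} (hxy : G.Adj x y)
    (h : s(x, y) = s(x', y')) (hc : c x = c x') : x = x' ∧ y = y' := by
  rcases Sym2.eq_iff.mp h with h | ⟨rfl, rfl⟩
  exacts [h, absurd hc (c.valid hxy)]

end SimpleGraph.Coloring

def seqPairs (p : ℕ → V) (k : ℕ) : List (Sym2 V) :=
  (List.range k).map fun l => s(p (2 * l + 1), p (2 * l + 2))

theorem seqPairs_succ (p : ℕ → V) (k : ℕ) :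
    seqPairs p (k + 1) = s(p 1, p 2) :: seqPairs (fun r => p (r + 2)) k := by
  simp only [seqPairs, List.range_succ_eq_map, List.map_cons, List.map_map]
  congr 2

theorem count_seqPairs [DecidableEq V] (p : ℕ → V) (k : ℕ) (f : Sym2 V) :
    (seqPairs p k).count f =
      ((Finset.range k).filter fun l => s(p (2 * l + 1), p (2 * l + 2)) = f).card := by
  rw [seqPairs, ← Multiset.coe_count, ← Multiset.map_coe, ← Multiset.range, Multiset.count_map,
    Finset.card_def, Finset.filter_val, Finset.range_val]
  simp only [eq_comm]

theorem seqPairs_subperm_iff [DecidableEq V] {p : ℕ → V} {k : ℕ} {E : List (Sym2 V)} :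
    (seqPairs p k).Subperm E ↔ (∀ l < k, s(p (2 * l + 1), p (2 * l + 2)) ∈ E) ∧
      ∀ f ∈ E, ((Finset.range k).filter
        fun l => s(p (2 * l + 1), p (2 * l + 2)) = f).card ≤ E.count f := by
  simp only [← count_seqPairs]
  refine ⟨fun h => ⟨fun l hl => h.subset ?_, fun f _ => h.count_le f⟩,
    fun ⟨hmem, hcount⟩ => List.subperm_ext_iff.mpr fun f hf => hcount f ?_⟩
  · exact List.mem_map.mpr ⟨l, List.mem_range.mpr hl, rfl⟩
  · obtain ⟨l, hl, rfl⟩ := List.mem_map.mp hf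
    exact hmem l (List.mem_range.mp hl)

inductive AltWalk (H : SimpleGraph V) : V → V → List (Sym2 V) → Prop
  | nil {a v : V} : H.Adj a v → AltWalk H a v []
  | cons {a x y v : V} {M : List (Sym2 V)} :
      H.Adj a x → H.Adj x y → AltWalk H y v M → AltWalk H a v (s(x, y) :: M)

namespace AltWalk

variable {H H' : SimpleGraph V} {a v : V} {M : List (Sym2 V)}

theorem mono (hle : H ≤ H') (hw : AltWalk H a v M) : AltWalk H' a v M := by
  induction hw with
  | nil h => exact nil (hle h)
  | cons hax hxy _ ih => exact cons (hle hax) (hle hxy) ih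

theorem append {x y : V} {M₁ M₂ : List (Sym2 V)} (hw₁ : AltWalk H a x M₁) (hxy : H.Adj x y)
    (hw₂ : AltWalk H y v M₂) : AltWalk H a v (M₁ ++ s(x, y) :: M₂) := by
  induction hw₁ with
  | nil hax => exact cons hax hxy hw₂
  | cons hax hxy' _ ih => exact cons hax hxy' (ih hxy)

theorem of_forall_adj {y : V} (hw : AltWalk H y v M) (h : ∀ z, H.Adj y z → H.Adj a z) :
    AltWalk H a v M := by
  cases hw with
  | nil hyv => exact nil (h _ hyv)
  | cons hyx hxz hw' => exact cons (h _ hyx) hxz hw'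

theorem color_ne (c : H.Coloring Bool) (hw : AltWalk H a v M) : c a ≠ c v := by
  induction hw with
  | nil h => exact c.valid h
  | cons hax hxy _ ih => exact c.eq_of_adj_of_adj hax hxy ▸ ih

theorem of_seq {p : ℕ → V} {k : ℕ} (h : ∀ r ≤ 2 * k, H.Adj (p r) (p (r + 1))) :
    AltWalk H (p 0) (p (2 * k + 1)) (seqPairs p k) := by
  induction k generalizing p with
  | zero => exact nil (h 0 le_rfl)
  | succ k ih =>
    rw [seqPairs_succ]
    exact cons (h 0 (by omega)) (h 1 (by omega))
      (ih (p := fun r => p (r + 2)) fun r hr => h (r + 2) (by omega))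

theorem exists_seq (hw : AltWalk H a v M) :
    ∃ p : ℕ → V, p 0 = a ∧ p (2 * M.length + 1) = v ∧
      (∀ r ≤ 2 * M.length, H.Adj (p r) (p (r + 1))) ∧ seqPairs p M.length = M := by
  induction hw with
  | @nil a v h =>
    refine ⟨fun r => if r = 0 then a else v, rfl, rfl, ?_, rfl⟩
    intro r hr
    obtain rfl : r = 0 := by simpa using hr
    simpa using h
  | @cons a x y v M hax hxy _ ih =>
    obtain ⟨p, hp0, hpv, hadj, hpairs⟩ := ih
    refine ⟨fun | 0 => a | 1 => x | r + 2 => p r, rfl, hpv, ?_, ?_⟩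
    · rintro (_ | _ | r) hr
      · exact hax
      · simpa [hp0] using hxy
      · exact hadj r (by simp at hr; omega)
    · rw [List.length_cons, seqPairs_succ]
      exact congrArg₂ _ (by rw [← hp0]) hpairs

end AltWalk

section EvenConnected

variable [DecidableEq V] {H : SimpleGraph V} {E : List (Sym2 V)} {u v : V}

theorem evenConnected_iff_exists_altWalk :
    EvenConnected H E u v ↔ ∃ M, M ≠ [] ∧ AltWalk H u v M ∧ M.Subperm E := by
  constructor
  · rintro ⟨k, p, hk, rfl, rfl, hadj, hmem, hcount⟩
    refine ⟨seqPairs p k, ?_, AltWalk.of_seq hadj, seqPairs_subperm_iff.mpr ⟨hmem, hcount⟩⟩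
    rw [← List.length_pos_iff, seqPairs, List.length_map, List.length_range]
    exact hk
  · rintro ⟨M, hM, hw, hME⟩
    obtain ⟨p, hp0, hpv, hadj, hpairs⟩ := hw.exists_seq
    exact ⟨M.length, p, List.length_pos_iff.mpr hM, hp0, hpv, hadj,
      seqPairs_subperm_iff.mp (by rwa [hpairs])⟩

theorem adj_or_evenConnected_iff_exists_altWalk :
    H.Adj u v ∨ EvenConnected H E u v ↔ ∃ M, AltWalk H u v M ∧ M.Subperm E := by
  rw [evenConnected_iff_exists_altWalk]
  constructor
  · rintro (h | ⟨M, -, hw, hME⟩)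
    exacts [⟨[], .nil h, List.nil_subperm⟩, ⟨M, hw, hME⟩]
  · rintro ⟨M, hw, hME⟩
    cases hw with
    | nil h => exact Or.inl h
    | cons hax hxy hw' => exact Or.inr ⟨_, List.cons_ne_nil _ _, .cons hax hxy hw', hME⟩

end EvenConnected

def shortcutGraph (G : SimpleGraph V) (e : Sym2 V) : SimpleGraph V where
  Adj a b := a ≠ b ∧ (G.Adj a b ∨ ∃ x y, G.Adj a x ∧ G.Adj x y ∧ G.Adj y b ∧ s(x, y) = e)
  symm := ⟨by
    rintro a b ⟨hne, h | ⟨x, y, hax, hxy, hyb, rfl⟩⟩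
    exacts [⟨hne.symm, .inl h.symm⟩,
      ⟨hne.symm, .inr ⟨y, x, hyb.symm, hxy.symm, hax.symm, Sym2.eq_swap⟩⟩]⟩
  loopless := ⟨fun _ h => h.1 rfl⟩

section shortcutGraph

variable {G : SimpleGraph V} {e : Sym2 V}

theorem shortcutGraph_adj {a b : V} : (shortcutGraph G e).Adj a b ↔
    a ≠ b ∧ (G.Adj a b ∨ ∃ x y, G.Adj a x ∧ G.Adj x y ∧ G.Adj y b ∧ s(x, y) = e) :=
  Iff.rfl

theorem le_shortcutGraph : G ≤ shortcutGraph G e := fun _ _ h => ⟨h.ne, .inl h⟩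

theorem adj_of_shortcutGraph_adj {a x y : V} (h : (shortcutGraph G e).Adj a x)
    (hxy : s(x, y) = e) : G.Adj a x := by
  obtain ⟨-, h | ⟨x', y', hax', hx'y', hy'x, he⟩⟩ := shortcutGraph_adj.mp h
  · exact h
  · rcases Sym2.eq_iff.mp (he.trans hxy.symm) with ⟨rfl, -⟩ | ⟨rfl, rfl⟩
    exacts [hax', (hy'x.ne rfl).elim]

theorem adj_or_evenConnected_singleton_iff [DecidableEq V] {a b : V} :
    G.Adj a b ∨ EvenConnected G [e] a b ↔
      G.Adj a b ∨ ∃ x y, G.Adj a x ∧ G.Adj x y ∧ G.Adj y b ∧ s(x, y) = e := by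
  rw [adj_or_evenConnected_iff_exists_altWalk]
  constructor
  · rintro ⟨M, hw, hM⟩
    rcases List.subperm_singleton_iff.mp hM with rfl | rfl
    · cases hw with
      | nil h => exact .inl h
    · cases hw with
      | cons hax hxy hw' => cases hw' with
        | nil hyb => exact .inr ⟨_, _, hax, hxy, hyb, rfl⟩
  · rintro (h | ⟨x, y, hax, hxy, hyb, rfl⟩)
    exacts [⟨[], .nil h, List.nil_subperm⟩, ⟨_, .cons hax hxy (.nil hyb), .refl _⟩]

theorem fromRel_adj_or_evenConnected_singleton [DecidableEq V] :
    fromRel (fun a b => G.Adj a b ∨ EvenConnected G [e] a b) = shortcutGraph G e := by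
  ext a b
  simp only [fromRel_adj, adj_or_evenConnected_singleton_iff, shortcutGraph_adj]
  constructor
  · rintro ⟨hne, h | h⟩
    exacts [⟨hne, h⟩, shortcutGraph_adj.mp (shortcutGraph_adj.mpr ⟨hne.symm, h⟩).symm]
  · rintro ⟨hne, h⟩
    exact ⟨hne, .inl h⟩

end shortcutGraph

namespace AltWalk

variable {G : SimpleGraph V} {e : Sym2 V} {a v : V} {M : List (Sym2 V)}

theorem exists_sublist_notMem (c : G.Coloring Bool) (he : e ∈ G.edgeSet)
    (hw : AltWalk (shortcutGraph G e) a v M) :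
    ∃ M', M'.Sublist M ∧ e ∉ M' ∧ AltWalk (shortcutGraph G e) a v M' := by
  induction hw with
  | nil h => exact ⟨[], .slnil, List.not_mem_nil, nil h⟩
  | @cons a x y v M hax hxy _ ih =>
    obtain ⟨M', hsub, hnotMem, hw'⟩ := ih
    by_cases hxye : s(x, y) = e
    · refine ⟨M', hsub.cons _, hnotMem, hw'.of_forall_adj fun z hyz => ?_⟩
      have hax : G.Adj a x := adj_of_shortcutGraph_adj hax hxye
      have hxy : G.Adj x y := by rwa [← hxye] at he
      have hyz : G.Adj y z :=
        (adj_of_shortcutGraph_adj hyz.symm (Sym2.eq_swap.trans hxye)).symm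
      exact shortcutGraph_adj.mpr
        ⟨c.ne_of_adj_of_adj_of_adj hax hxy hyz, .inr ⟨x, y, hax, hxy, hyz, hxye⟩⟩
    · refine ⟨s(x, y) :: M', hsub.cons_cons _, ?_, cons hax hxy hw'⟩
      simpa [Ne.symm hxye] using hnotMem

theorem of_shortcutGraph (c : G.Coloring Bool) (hw : AltWalk (shortcutGraph G e) a v M)
    (hM : ∀ f ∈ M, f ∈ G.edgeSet) :
    AltWalk G a v M ∨ ∃ x y M₁ M₂, s(x, y) = e ∧ (M₁ ++ M₂).Sublist M ∧
      AltWalk G a x M₁ ∧ AltWalk G y v M₂ := by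
  induction hw with
  | nil h =>
    obtain ⟨-, h | ⟨x, y, hax, -, hyv, hxy⟩⟩ := shortcutGraph_adj.mp h
    exacts [.inl (nil h), .inr ⟨x, y, [], [], hxy, .slnil, nil hax, nil hyv⟩]
  | @cons a x y v M hax hxy tail ih =>
    have hxy : G.Adj x y := hM _ List.mem_cons_self
    obtain ⟨-, hax | ⟨x₀, y₀, hax₀, hx₀y₀, hy₀x, he₀⟩⟩ := shortcutGraph_adj.mp hax <;>
      rcases ih fun f hf => hM f (.tail _ hf) with
        tail | ⟨x', y', M₁, M₂, he', hsub, hw₁, hw₂⟩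
    · exact .inl (cons hax hxy tail)
    · exact .inr ⟨x', y', _, M₂, he', hsub.cons_cons _, cons hax hxy hw₁, hw₂⟩
    · exact .inr ⟨x₀, y₀, [], _, he₀, .refl _, nil hax₀, cons hy₀x hxy tail⟩
    · -- both shortcuts run through `e` in the same direction, since `G` is bipartite
      have hcol : c x₀ = c x' := (c.eq_of_adj_of_adj hx₀y₀ hy₀x).trans
        (c.eq_of_ne_of_ne (c.valid hxy) (hw₁.color_ne c))
      obtain ⟨rfl, rfl⟩ := c.eq_of_mk_eq hx₀y₀ (he₀.trans he'.symm) hcol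
      exact .inr ⟨x₀, y₀, [], M₂, he₀,
        ((List.sublist_append_right M₁ M₂).trans hsub).cons _, nil hax₀, hw₂⟩

theorem exists_subperm_of_shortcutGraph (c : G.Coloring Bool) (he : e ∈ G.edgeSet)
    (hw : AltWalk (shortcutGraph G e) a v M) (hM : ∀ f ∈ M, f ∈ G.edgeSet) :
    ∃ M', AltWalk G a v M' ∧ M'.Subperm (e :: M) := by
  rcases hw.of_shortcutGraph c hM with hw | ⟨x, y, M₁, M₂, rfl, hsub, hw₁, hw₂⟩
  · exact ⟨M, hw, (List.sublist_cons_self _ M).subperm⟩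
  · exact ⟨_, hw₁.append he hw₂, List.perm_middle.subperm.trans
      ((List.subperm_cons _).mpr hsub.subperm)⟩

end AltWalk

theorem colon_ideal_iteration_general
    [DecidableEq V] (G : SimpleGraph V) (X Y : Set V)
    (hbip : IsBipartition G X Y) (E : List (Sym2 V))
    (hE : ∀ e' ∈ E, e' ∈ G.edgeSet) (e : Sym2 V) (he : e ∈ E)
    (Gi : SimpleGraph V)
    (hGi : Gi = SimpleGraph.fromRel
      (fun a b => G.Adj a b ∨ EvenConnected G [e] a b))
    (u v : V) :
    (G.Adj u v ∨ EvenConnected G E u v) ↔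
      (Gi.Adj u v ∨ EvenConnected Gi (E.erase e) u v) := by
  obtain ⟨c⟩ := hbip.nonempty_coloring
  subst hGi
  rw [fromRel_adj_or_evenConnected_singleton, adj_or_evenConnected_iff_exists_altWalk,
    adj_or_evenConnected_iff_exists_altWalk]
  constructor
  · rintro ⟨M, hw, hME⟩
    obtain ⟨M', hsub, hnotMem, hw'⟩ :=
      (hw.mono le_shortcutGraph).exists_sublist_notMem c (hE e he)
    refine ⟨M', hw', ?_⟩
    rw [← List.erase_of_not_mem hnotMem]
    exact (hsub.subperm.trans hME).erase e
  · rintro ⟨M, hw, hME⟩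
    obtain ⟨M', hw', hM'⟩ := hw.exists_subperm_of_shortcutGraph c (hE e he)
      fun f hf => hE f (List.mem_of_mem_erase (hME.subset hf))
    exact ⟨M', hw', hM'.trans <|
      ((List.subperm_cons e).mpr hME).trans (List.perm_cons_erase he).symm.subperm⟩

/-- (graph-theoretic content of Lemma 3.7) for bipartite `G` and
an edge `e` of the list `E`, `u, v` are even-connected w.r.t. `E` (or adjacent
in `G`) iff they are even-connected in `Gᵢ = G + (even-connections w.r.t. e)`
with respect to `E.erase e` (or adjacent in `Gᵢ`). -/
theorem colon_ideal_iteration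
    [Fintype V] [DecidableEq V] (G : SimpleGraph V) (X Y : Set V)
    (hbip : IsBipartition G X Y) (E : List (Sym2 V))
    (hE : ∀ e' ∈ E, e' ∈ G.edgeSet) (e : Sym2 V) (he : e ∈ E)
    (Gi : SimpleGraph V)
    (hGi : Gi = SimpleGraph.fromRel
      (fun a b => G.Adj a b ∨ EvenConnected G [e] a b))
    (u v : V) (huv : u ≠ v) :
    (G.Adj u v ∨ EvenConnected G E u v) ↔
      (Gi.Adj u v ∨ EvenConnected Gi (E.erase e) u v) :=
  colon_ideal_iteration_general G X Y hbip E hE e he Gi hGi u v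
end

section
/- Let G be a bipartite graph with bipartition X ⊔ Y and let P : u = x_0, y_1, x_1, y_2, x_2, ..., y_{k+1} = v be an even-connection in G with respect to edges e_1,...,e_s, where exactly the pairs y_{α_1}x_{α_1}, ..., y_{α_ℓ}x_{α_ℓ} (α_1 < ... < α_ℓ) equal the edge e_1. Then x_{α_1 − 1} and y_{α_ℓ + 1} are even-connected in G with respect to the single edge e_1. -/
open SimpleGraph

variable {V : Type*}

/-- if in an even-connection `p` w.r.t. `E` exactly the matched
pairs with indices in `[a, b]`-range equal `e₁` (with the first at `a` and the
last at `b`), then `p (2a)` (i.e. `x_{α₁ - 1}`) and `p (2b + 3)` (i.e.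
`y_{α_ℓ + 1}`) are even-connected with respect to the single edge `e₁`. -/
theorem evenConnected_across_extreme_occurrences
    [Fintype V] [DecidableEq V] (G : SimpleGraph V) (X Y : Set V)
    (hbip : IsBipartition G X Y)
    (E : List (Sym2 V)) (e1 : Sym2 V) (he1 : e1 ∈ E)
    (k : ℕ) (hk : 1 ≤ k) (p : ℕ → V)
    (hadj : ∀ r, r ≤ 2 * k → G.Adj (p r) (p (r + 1)))
    (hmatch : ∀ l, l < k → s(p (2 * l + 1), p (2 * l + 2)) ∈ E)
    (hcount : ∀ e ∈ E, ((Finset.range k).filter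
      (fun l => s(p (2 * l + 1), p (2 * l + 2)) = e)).card ≤ E.count e)
    (a b : ℕ) (hab : a ≤ b) (hb : b < k)
    (ha1 : s(p (2 * a + 1), p (2 * a + 2)) = e1)
    (hb1 : s(p (2 * b + 1), p (2 * b + 2)) = e1)
    (hexact : ∀ l, l < k → s(p (2 * l + 1), p (2 * l + 2)) = e1 →
      a ≤ l ∧ l ≤ b) :
    EvenConnected G [e1] (p (2 * a)) (p (2 * b + 3)) := by
  classical
  obtain ⟨hdisj, hcover, hX, hY⟩ := hbip
  -- adjacent vertices lie on opposite sides
  have hside : ∀ u v : V, G.Adj u v → (u ∈ X ↔ ¬ v ∈ X) := by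
    intro u v huv
    have hu : u ∈ X ∪ Y := hcover ▸ Set.mem_univ u
    have hv : v ∈ X ∪ Y := hcover ▸ Set.mem_univ v
    constructor
    · intro huX hvX
      exact hX u huX v hvX huv
    · intro hvX
      rcases hu with h | h
      · exact h
      · rcases hv with h' | h'
        · exact absurd h' hvX
        · exact absurd huv (hY u h v h')
  -- parity lemma
  have hpar : ∀ r, r ≤ 2 * k + 1 → (p r ∈ X ↔ (p 0 ∈ X ↔ Even r)) := by
    intro r
    induction r with
    | zero => simp
    | succ n ih =>
      intro hn
      have hn' : n ≤ 2 * k := Nat.lt_succ_iff.mp (Nat.lt_of_lt_of_le (Nat.lt_succ_self n) hn)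
      have h1 := ih (Nat.le_succ_of_le hn')
      have h2 := hside _ _ (hadj n hn')
      have h3 : Even (n + 1) ↔ ¬ Even n := Nat.even_add_one
      by_cases h0 : p 0 ∈ X <;> by_cases hen : Even n <;> simp_all
  have hbk : 2 * b + 2 ≤ 2 * k := by omega
  have hak : 2 * a ≤ 2 * k := by omega
  -- p (2a+1) ≠ p (2b+2) by parity
  have hne : p (2 * a + 1) ≠ p (2 * b + 2) := by
    intro heq
    have h1 := hpar (2 * a + 1) (by omega)
    have h2 := hpar (2 * b + 2) (by omega)
    rw [heq] at h1
    have e1' : ¬ Even (2 * a + 1) := by simp [Nat.even_add_one, parity_simps]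
    have e2' : Even (2 * b + 2) := ⟨b + 1, by ring⟩
    by_cases h0 : p 0 ∈ X <;> simp_all
  -- hence the two occurrences of e1 are oriented the same way
  have hsame : p (2 * a + 2) = p (2 * b + 2) := by
    have : s(p (2 * a + 1), p (2 * a + 2)) = s(p (2 * b + 1), p (2 * b + 2)) := by
      rw [ha1, hb1]
    rcases Sym2.eq_iff.mp this with ⟨h1, h2⟩ | ⟨h1, h2⟩
    · exact h2
    · exact absurd h1 hne
  refine ⟨1, fun n => if n = 0 then p (2 * a) else if n = 1 then p (2 * a + 1)
      else if n = 2 then p (2 * a + 2) else p (2 * b + 3), le_refl 1, rfl, rfl, ?_, ?_, ?_⟩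
  · intro r hr
    interval_cases r
    · simpa using hadj (2 * a) hak
    · simpa using hadj (2 * a + 1) (by omega)
    · simp only [show (2:ℕ) ≠ 0 by norm_num, show (2:ℕ) ≠ 1 by norm_num, if_false, if_true,
        show (2:ℕ) + 1 = 3 by norm_num, show (3:ℕ) ≠ 0 by norm_num, show (3:ℕ) ≠ 1 by norm_num,
        show (3:ℕ) ≠ 2 by norm_num, if_neg]
      rw [hsame]
      simpa using hadj (2 * b + 2) hbk
  · intro l hl
    have : l = 0 := by omega
    subst this
    simpa using ha1
  · intro e he
    simp only [List.mem_singleton] at he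
    subst he
    exact le_trans (Finset.card_filter_le _ _) (by simp)
end

section
/- Let G be a graph, and let P' : u = p_0, p_1, ..., p_{2k+1} = v be a walk satisfying conditions (1), (2), (4) of even-connectedness with respect to an edge list containing e_1 with multiplicity 1, but in which the edge e_1 = yx occurs in matched positions more than once. If i < j are indices with |j − i| maximal such that the segments x_i y x y_{i+1} and x_j y x y_{j+1} both occur in P', then the shortened walk u = x_0 y_1 x_1 ... x_i y x y_{j+1} ... y_{k+1} = v obtained by deleting the portion strictly between the first occurrence of x and y_{j+1} is a walk in G that uses e_1 exactly once in its matched positions. -/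
open SimpleGraph

variable {V : Type*}

/-- path surgery: splicing out the portion of the walk between
the first and last occurrence of `e₁ = yx` yields a walk in `G` from `u` to
`v` using `e₁` exactly once among its matched positions. -/
theorem walk_surgery_single_use
    [Fintype V] [DecidableEq V] (G : SimpleGraph V)
    (E : List (Sym2 V)) (x y : V) (he : G.Adj x y) (he1 : s(y, x) ∈ E)
    (hcnt : E.count s(y, x) = 1)
    (k : ℕ) (p : ℕ → V) (u v : V) (h0 : p 0 = u) (hend : p (2 * k + 1) = v)
    (hadj : ∀ r, r ≤ 2 * k → G.Adj (p r) (p (r + 1)))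
    (hmatch : ∀ l, l < k → s(p (2 * l + 1), p (2 * l + 2)) ∈ E)
    (i j : ℕ) (hij : i < j) (hj : j < k)
    (hi1 : p (2 * i + 1) = y) (hi2 : p (2 * i + 2) = x)
    (hj1 : p (2 * j + 1) = y) (hj2 : p (2 * j + 2) = x)
    (hmax : ∀ l, l < k → s(p (2 * l + 1), p (2 * l + 2)) = s(y, x) →
      i ≤ l ∧ l ≤ j) :
    ∀ (q : ℕ → V), q = (fun r => if r ≤ 2 * i + 2 then p r else p (r + 2 * (j - i))) →
    ∀ (k' : ℕ), k' = k - (j - i) →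
      q 0 = u ∧ q (2 * k' + 1) = v ∧
      (∀ r, r ≤ 2 * k' → G.Adj (q r) (q (r + 1))) ∧
      ((Finset.range k').filter
        (fun l => s(q (2 * l + 1), q (2 * l + 2)) = s(y, x))).card = 1 := by
  intro q hq k' hk'
  subst hq hk'
  refine ⟨?_, ?_, ?_, ?_⟩
  · simp [h0]
  · have h1 : ¬ (2 * (k - (j - i)) + 1 ≤ 2 * i + 2) := by omega
    simp only [h1, if_false]
    have h2 : 2 * (k - (j - i)) + 1 + 2 * (j - i) = 2 * k + 1 := by omega
    rw [h2, hend]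
  · intro r hr
    by_cases h1 : r + 1 ≤ 2 * i + 2
    · have h2 : r ≤ 2 * i + 2 := by omega
      simp only [h1, h2, if_true]
      exact hadj r (by omega)
    · by_cases h2 : r ≤ 2 * i + 2
      · have hr2 : r = 2 * i + 2 := by omega
        simp only [h1, h2, if_true, if_false]
        subst hr2
        have h3 : 2 * i + 2 + 1 + 2 * (j - i) = 2 * j + 2 + 1 := by omega
        rw [h3, hi2, ← hj2]
        exact hadj (2 * j + 2) (by omega)
      · have h3 : ¬ (r + 1 ≤ 2 * i + 2) := by omega
        simp only [h2, h3, if_false]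
        have h4 : r + 2 * (j - i) + 1 = r + 1 + 2 * (j - i) := by omega
        rw [← h4]
        exact hadj (r + 2 * (j - i)) (by omega)
  · have hset : ((Finset.range (k - (j - i))).filter
        (fun l => s((fun r => if r ≤ 2 * i + 2 then p r else p (r + 2 * (j - i))) (2 * l + 1),
          (fun r => if r ≤ 2 * i + 2 then p r else p (r + 2 * (j - i))) (2 * l + 2)) = s(y, x)))
        = {i} := by
      ext l
      simp only [Finset.mem_filter, Finset.mem_range, Finset.mem_singleton]
      constructor
      · rintro ⟨hl, heq⟩
        by_cases hli : l ≤ i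
        · have ha : 2 * l + 1 ≤ 2 * i + 2 := by omega
          have hb : 2 * l + 2 ≤ 2 * i + 2 := by omega
          simp only [ha, hb, if_true] at heq
          have := hmax l (by omega) heq
          omega
        · have ha : ¬ (2 * l + 1 ≤ 2 * i + 2) := by omega
          have hb : ¬ (2 * l + 2 ≤ 2 * i + 2) := by omega
          simp only [ha, hb, if_false] at heq
          have e1 : 2 * l + 1 + 2 * (j - i) = 2 * (l + (j - i)) + 1 := by omega
          have e2 : 2 * l + 2 + 2 * (j - i) = 2 * (l + (j - i)) + 2 := by omega
          rw [e1, e2] at heq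
          have := hmax (l + (j - i)) (by omega) heq
          omega
      · rintro rfl
        refine ⟨by omega, ?_⟩
        beta_reduce
        rw [if_pos (by omega), if_pos le_rfl, hi1, hi2]
    rw [hset]
    simp
end

section
/- Let G be a bipartite graph with bipartition X ⊔ Y in which every induced cycle of the bipartite complement G^{bc} has length at most 4, and suppose G^{bc} contains a cycle x_1 y_1 x_2 y_2 ... x_n y_n of length 2n with n ≥ 3 (x_i ∈ X, y_i ∈ Y, with edges x_i y_i and x_{i+1} y_i, indices mod n). Then this cycle has a chord in G^{bc}, and moreover there exist four of its vertices x_a, y_b, x_c, y_d forming a 4-cycle in G^{bc} using two cycle edges and chords. -/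
open SimpleGraph

variable {V : Type*}

/-! ### Auxiliary lemmas -/

lemma zval_succ {N : ℕ} [NeZero N] (i : ZMod N) : (i + 1).val = (i.val + 1) % N := by
  rw [ZMod.val_add, ZMod.val_one_eq_one_mod, Nat.add_mod_mod]

lemma zval_inj {N : ℕ} [NeZero N] {i j : ZMod N} (h : i.val = j.val) : i = j := by
  rw [← ZMod.natCast_zmod_val i, ← ZMod.natCast_zmod_val j, h]

lemma zcast_inj {n a b : ℕ} (ha : a < n) (hb : b < n) (h : (a : ZMod n) = b) : a = b := by
  rw [ZMod.natCast_eq_natCast_iff', Nat.mod_eq_of_lt ha, Nat.mod_eq_of_lt hb] at h; exact h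

lemma zsucc_of_val {N : ℕ} [NeZero N] {i j : ZMod N} (h : j.val % N = (i.val + 1) % N) :
    j = i + 1 := by
  have h2 : ((j.val : ℕ) : ZMod N) = ((i.val + 1 : ℕ) : ZMod N) :=
    (ZMod.natCast_eq_natCast_iff' _ _ _).mpr h
  rwa [ZMod.natCast_zmod_val, Nat.cast_add, Nat.cast_one, ZMod.natCast_zmod_val] at h2

lemma no_adj_XX {G : SimpleGraph V} {X Y : Set V} (hd : Disjoint X Y)
    {u v : V} (hu : u ∈ X) (hv : v ∈ X) : ¬ (bipCompl G X Y).Adj u v := by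
  rw [bipCompl, SimpleGraph.fromRel_adj]
  rintro ⟨-, ⟨-, h, -⟩ | ⟨-, h, -⟩⟩
  · exact Set.disjoint_left.mp hd hv h
  · exact Set.disjoint_left.mp hd hu h

lemma no_adj_YY {G : SimpleGraph V} {X Y : Set V} (hd : Disjoint X Y)
    {u v : V} (hu : u ∈ Y) (hv : v ∈ Y) : ¬ (bipCompl G X Y).Adj u v := by
  rw [bipCompl, SimpleGraph.fromRel_adj]
  rintro ⟨-, ⟨h, -, -⟩ | ⟨h, -, -⟩⟩
  · exact Set.disjoint_left.mp hd h hu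
  · exact Set.disjoint_left.mp hd h hv

/-- The `2n`-cycle built from the two interleaved families. -/
def cyc (n : ℕ) (x y : ZMod n → V) (i : ZMod (2 * n)) : V :=
  if i.val % 2 = 0 then x ((i.val / 2 : ℕ) : ZMod n) else y ((i.val / 2 : ℕ) : ZMod n)

lemma cyc_even {n : ℕ} {x y : ZMod n → V} {i : ZMod (2 * n)} (h : i.val % 2 = 0) :
    cyc n x y i = x ((i.val / 2 : ℕ) : ZMod n) := if_pos h

lemma cyc_odd {n : ℕ} {x y : ZMod n → V} {i : ZMod (2 * n)} (h : ¬ i.val % 2 = 0) :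
    cyc n x y i = y ((i.val / 2 : ℕ) : ZMod n) := if_neg h

lemma chord_exists {G : SimpleGraph V} {X Y : Set V}
    (hbip : IsBipartition G X Y)
    (hind : ∀ (m : ℕ) (c : ZMod m → V),
      IsInducedCycleOn (bipCompl G X Y) c → m ≤ 4)
    (n : ℕ) (hn : 3 ≤ n) (x y : ZMod n → V)
    (hxX : ∀ i, x i ∈ X) (hyY : ∀ i, y i ∈ Y)
    (hinj : Function.Injective (fun z : ZMod n ⊕ ZMod n => Sum.elim x y z))
    (he1 : ∀ i, (bipCompl G X Y).Adj (x i) (y i))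
    (he2 : ∀ i, (bipCompl G X Y).Adj (x (i + 1)) (y i)) :
    ∃ i j : ZMod n, j ≠ i ∧ i ≠ j + 1 ∧ (bipCompl G X Y).Adj (x i) (y j) := by
  by_contra hno
  push_neg at hno
  have hno' : ∀ a b, (bipCompl G X Y).Adj (x a) (y b) → b = a ∨ a = b + 1 := by
    intro a b ha
    by_contra h
    push_neg at h
    exact hno a b h.1 h.2 ha
  haveI : NeZero n := ⟨by omega⟩
  haveI : NeZero (2 * n) := ⟨by omega⟩
  have hx_inj : Function.Injective x := fun a b h => by
    simpa using hinj (a₁ := Sum.inl a) (a₂ := Sum.inl b) h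
  have hy_inj : Function.Injective y := fun a b h => by
    simpa using hinj (a₁ := Sum.inr a) (a₂ := Sum.inr b) h
  have hxy : ∀ a b, x a ≠ y b := fun a b h => by
    simpa using hinj (a₁ := Sum.inl a) (a₂ := Sum.inr b) h
  have hd := hbip.1
  -- injectivity
  have hcinj : Function.Injective (cyc n x y) := by
    intro i j h
    have hi := ZMod.val_lt i; have hj := ZMod.val_lt j
    apply zval_inj
    by_cases hp : i.val % 2 = 0 <;> by_cases hq : j.val % 2 = 0
    · rw [cyc_even hp, cyc_even hq] at h
      have := zcast_inj (a := i.val / 2) (b := j.val / 2) (by omega) (by omega) (hx_inj h)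
      omega
    · rw [cyc_even hp, cyc_odd hq] at h
      exact absurd h (hxy _ _)
    · rw [cyc_odd hp, cyc_even hq] at h
      exact absurd h.symm (hxy _ _)
    · rw [cyc_odd hp, cyc_odd hq] at h
      have := zcast_inj (a := i.val / 2) (b := j.val / 2) (by omega) (by omega) (hy_inj h)
      omega
  -- consecutive adjacency
  have hadj : ∀ i : ZMod (2 * n), (bipCompl G X Y).Adj (cyc n x y i) (cyc n x y (i + 1)) := by
    intro i
    have hi := ZMod.val_lt i
    have h1 := zval_succ i
    by_cases hp : i.val % 2 = 0
    · have h2 : (i + 1).val = i.val + 1 := by rw [h1, Nat.mod_eq_of_lt (by omega)]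
      rw [cyc_even hp, cyc_odd (by omega), h2,
        show (i.val + 1) / 2 = i.val / 2 by omega]
      exact he1 _
    · by_cases hw : i.val + 1 < 2 * n
      · have h2 : (i + 1).val = i.val + 1 := by rw [h1, Nat.mod_eq_of_lt hw]
        rw [cyc_odd hp, cyc_even (by omega), h2,
          show (i.val + 1) / 2 = i.val / 2 + 1 by omega, Nat.cast_add, Nat.cast_one]
        exact (he2 _).symm
      · have hv : i.val = 2 * n - 1 := by omega
        have h2 : (i + 1).val = 0 := by rw [h1, show i.val + 1 = 2 * n by omega, Nat.mod_self]
        rw [cyc_odd hp, cyc_even (by omega), h2]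
        have e1 : ((0 / 2 : ℕ) : ZMod n) = ((n - 1 : ℕ) : ZMod n) + 1 := by
          rw [show ((n - 1 : ℕ) : ZMod n) + 1 = ((n - 1 + 1 : ℕ) : ZMod n) by push_cast; ring,
            show n - 1 + 1 = n by omega, ZMod.natCast_self]
          simp
        rw [e1, show i.val / 2 = n - 1 by omega]
        exact (he2 _).symm
  -- chordless
  have hchordless : ∀ i j : ZMod (2 * n),
      (bipCompl G X Y).Adj (cyc n x y i) (cyc n x y j) → j = i + 1 ∨ i = j + 1 := by
    intro i j ha
    have hi := ZMod.val_lt i; have hj := ZMod.val_lt j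
    by_cases hp : i.val % 2 = 0 <;> by_cases hq : j.val % 2 = 0
    · rw [cyc_even hp, cyc_even hq] at ha
      exact absurd ha (no_adj_XX hd (hxX _) (hxX _))
    · rw [cyc_even hp, cyc_odd hq] at ha
      rcases hno' _ _ ha with h | h
      · left
        apply zsucc_of_val
        rw [ZMod.natCast_eq_natCast_iff'] at h
        have h2 : j.val / 2 = i.val / 2 := by
          rwa [Nat.mod_eq_of_lt (by omega), Nat.mod_eq_of_lt (by omega)] at h
        rw [show j.val = i.val + 1 by omega]
      · right
        apply zsucc_of_val
        rw [show ((j.val / 2 : ℕ) : ZMod n) + 1 = ((j.val / 2 + 1 : ℕ) : ZMod n) by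
            push_cast; ring, ZMod.natCast_eq_natCast_iff'] at h
        by_cases hb : j.val / 2 + 1 < n
        · have h2 : i.val / 2 = j.val / 2 + 1 := by
            rwa [Nat.mod_eq_of_lt (by omega), Nat.mod_eq_of_lt hb] at h
          rw [show i.val = j.val + 1 by omega]
        · have hb' : j.val / 2 + 1 = n := by omega
          rw [hb', Nat.mod_self, Nat.mod_eq_of_lt (by omega)] at h
          have hj' : j.val = 2 * n - 1 := by omega
          have hi' : i.val = 0 := by omega
          rw [hi', hj', show 2 * n - 1 + 1 = 2 * n by omega, Nat.mod_self, Nat.zero_mod]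
    · rw [cyc_odd hp, cyc_even hq] at ha
      rcases hno' _ _ ha.symm with h | h
      · right
        apply zsucc_of_val
        rw [ZMod.natCast_eq_natCast_iff'] at h
        have h2 : i.val / 2 = j.val / 2 := by
          rwa [Nat.mod_eq_of_lt (by omega), Nat.mod_eq_of_lt (by omega)] at h
        rw [show i.val = j.val + 1 by omega]
      · left
        apply zsucc_of_val
        rw [show ((i.val / 2 : ℕ) : ZMod n) + 1 = ((i.val / 2 + 1 : ℕ) : ZMod n) by
            push_cast; ring, ZMod.natCast_eq_natCast_iff'] at h
        by_cases hb : i.val / 2 + 1 < n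
        · have h2 : j.val / 2 = i.val / 2 + 1 := by
            rwa [Nat.mod_eq_of_lt (by omega), Nat.mod_eq_of_lt hb] at h
          rw [show j.val = i.val + 1 by omega]
        · have hb' : i.val / 2 + 1 = n := by omega
          rw [hb', Nat.mod_self, Nat.mod_eq_of_lt (by omega)] at h
          have hi' : i.val = 2 * n - 1 := by omega
          have hj' : j.val = 0 := by omega
          rw [hi', hj', show 2 * n - 1 + 1 = 2 * n by omega, Nat.mod_self, Nat.zero_mod]
    · rw [cyc_odd hp, cyc_odd hq] at ha
      exact absurd ha (no_adj_YY hd (hyY _) (hyY _))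
  have := hind (2 * n) (cyc n x y) ⟨⟨hcinj, hadj⟩, hchordless⟩
  omega

lemma four_cycle {G : SimpleGraph V} {X Y : Set V}
    (hbip : IsBipartition G X Y)
    (hind : ∀ (m : ℕ) (c : ZMod m → V),
      IsInducedCycleOn (bipCompl G X Y) c → m ≤ 4) :
    ∀ n : ℕ, 2 ≤ n → ∀ x y : ZMod n → V,
      (∀ i, x i ∈ X) → (∀ i, y i ∈ Y) →
      Function.Injective (fun z : ZMod n ⊕ ZMod n => Sum.elim x y z) →
      (∀ i, (bipCompl G X Y).Adj (x i) (y i)) →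
      (∀ i, (bipCompl G X Y).Adj (x (i + 1)) (y i)) →
      ∃ a b c d : ZMod n, x a ≠ x c ∧ y b ≠ y d ∧
        (bipCompl G X Y).Adj (x a) (y b) ∧ (bipCompl G X Y).Adj (x c) (y b) ∧
        (bipCompl G X Y).Adj (x c) (y d) ∧ (bipCompl G X Y).Adj (x a) (y d) := by
  intro n
  induction n using Nat.strong_induction_on with
  | _ n IH =>
  intro hn x y hxX hyY hinj he1 he2
  haveI : NeZero n := ⟨by omega⟩
  have hx_inj : Function.Injective x := fun a b h => by
    simpa using hinj (a₁ := Sum.inl a) (a₂ := Sum.inl b) h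
  have hy_inj : Function.Injective y := fun a b h => by
    simpa using hinj (a₁ := Sum.inr a) (a₂ := Sum.inr b) h
  have hxy : ∀ a b, x a ≠ y b := fun a b h => by
    simpa using hinj (a₁ := Sum.inl a) (a₂ := Sum.inr b) h
  rcases eq_or_lt_of_le hn with h2 | h3
  · -- base case n = 2
    subst h2
    refine ⟨0, 0, 1, 1, ?_, ?_, he1 0, ?_, he1 1, ?_⟩
    · intro h; exact absurd (hx_inj h) (by decide)
    · intro h; exact absurd (hy_inj h) (by decide)
    · have := he2 0; rwa [show (0 : ZMod 2) + 1 = 1 by decide] at this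
    · have := he2 1; rwa [show (1 : ZMod 2) + 1 = 0 by decide] at this
  · -- inductive step, 3 ≤ n
    obtain ⟨i, j, hji, hij1, hchord⟩ :=
      chord_exists hbip hind n h3 x y hxX hyY hinj he1 he2
    set m := (j - i).val with hm
    have hmlt : m < n := ZMod.val_lt _
    have hm1 : 1 ≤ m := by
      rcases Nat.eq_zero_or_pos m with h | h
      · exact absurd (sub_eq_zero.mp ((ZMod.val_eq_zero _).mp h)) hji
      · exact h
    have hm2 : m ≤ n - 2 := by
      by_contra hc
      have hmn : m = n - 1 := by omega
      apply hij1
      have hsub : j - i = ((n - 1 : ℕ) : ZMod n) := by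
        rw [← ZMod.natCast_zmod_val (j - i), ← hm, hmn]
      have : j + 1 - i = 0 := by
        rw [add_sub_right_comm, hsub,
          show ((n - 1 : ℕ) : ZMod n) + 1 = ((n - 1 + 1 : ℕ) : ZMod n) by push_cast; ring,
          show n - 1 + 1 = n by omega, ZMod.natCast_self]
      exact (sub_eq_zero.mp this).symm
    haveI : NeZero (m + 1) := ⟨by omega⟩
    have hkey : ∀ a b : ZMod (m + 1),
        i + ((a.val : ℕ) : ZMod n) = i + ((b.val : ℕ) : ZMod n) → a = b := by
      intro a b h
      have ha := ZMod.val_lt a; have hb := ZMod.val_lt b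
      exact zval_inj (zcast_inj (by omega) (by omega) (add_left_cancel h))
    obtain ⟨a, b, c, d, g1, g2, g3, g4, g5, g6⟩ :=
      IH (m + 1) (by omega) (by omega)
        (fun k => x (i + ((k.val : ℕ) : ZMod n)))
        (fun k => y (i + ((k.val : ℕ) : ZMod n)))
        (fun k => hxX _) (fun k => hyY _)
        (by
          rintro (a | a) (b | b) h
          · exact congrArg Sum.inl (hkey _ _ (hx_inj h))
          · exact absurd h (hxy _ _)
          · exact absurd (Eq.symm h) (hxy _ _)
          · exact congrArg Sum.inr (hkey _ _ (hy_inj h)))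
        (fun k => he1 _)
        (by
          intro k
          have hk := ZMod.val_lt k
          have h1 := zval_succ k
          by_cases hw : k.val + 1 < m + 1
          · have h2 : (k + 1).val = k.val + 1 := by rw [h1, Nat.mod_eq_of_lt hw]
            show (bipCompl G X Y).Adj (x (i + ((k + 1).val : ZMod n)))
              (y (i + ((k.val : ℕ) : ZMod n)))
            rw [h2, Nat.cast_add, Nat.cast_one, ← add_assoc]
            exact he2 _
          · have hkv : k.val = m := by omega
            have h2 : (k + 1).val = 0 := by
              rw [h1, show k.val + 1 = m + 1 by omega, Nat.mod_self]
            show (bipCompl G X Y).Adj (x (i + ((k + 1).val : ZMod n)))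
              (y (i + ((k.val : ℕ) : ZMod n)))
            rw [h2, hkv, Nat.cast_zero, add_zero, hm, ZMod.natCast_zmod_val,
              show i + (j - i) = j by ring]
            exact hchord)
    exact ⟨i + ((a.val : ℕ) : ZMod n), i + ((b.val : ℕ) : ZMod n),
      i + ((c.val : ℕ) : ZMod n), i + ((d.val : ℕ) : ZMod n), g1, g2, g3, g4, g5, g6⟩

/-- if every induced cycle of `G^{bc}` has length at most `4`,
then any cycle `x₁ y₁ x₂ y₂ … xₙ yₙ` of length `2n ≥ 6` in `G^{bc}` has a
chord, and four of its vertices form a `4`-cycle in `G^{bc}`. -/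
theorem bipCompl_cycle_chord_and_fourCycle
    [Fintype V] (G : SimpleGraph V) (X Y : Set V)
    (hbip : IsBipartition G X Y)
    (hind : ∀ (m : ℕ) (c : ZMod m → V),
      IsInducedCycleOn (bipCompl G X Y) c → m ≤ 4)
    (n : ℕ) (hn : 3 ≤ n) (x y : ZMod n → V)
    (hxX : ∀ i, x i ∈ X) (hyY : ∀ i, y i ∈ Y)
    (hinj : Function.Injective (fun z : ZMod n ⊕ ZMod n => Sum.elim x y z))
    (he1 : ∀ i, (bipCompl G X Y).Adj (x i) (y i))
    (he2 : ∀ i, (bipCompl G X Y).Adj (x (i + 1)) (y i)) :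
    (∃ i j : ZMod n, j ≠ i ∧ i ≠ j + 1 ∧ (bipCompl G X Y).Adj (x i) (y j)) ∧
    (∃ a b c d : ZMod n, x a ≠ x c ∧ y b ≠ y d ∧
      (bipCompl G X Y).Adj (x a) (y b) ∧ (bipCompl G X Y).Adj (x c) (y b) ∧
      (bipCompl G X Y).Adj (x c) (y d) ∧ (bipCompl G X Y).Adj (x a) (y d)) := by
  refine ⟨chord_exists hbip hind n hn x y hxX hyY hinj he1 he2,
    four_cycle hbip hind n (by omega) x y hxX hyY hinj he1 he2⟩
end
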